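/- If K → M is a λ-pure morphism and M is weakly λ-saturated, then K is weakly λ-saturated. -/
import Mathlib


open CategoryTheory Limits Opposite

universe v u

variable {C : Type u} [Category.{v} C]

/-- An arrow `e : A ⟶ B` is amalgamable if every span out of `B` completes to a
square commuting over `e`. -/
def Amalgamable {A B : C} (e : A ⟶ B) : Prop :=
  ∀ {X Y : C} (f : B ⟶ X) (g : B ⟶ Y),
    ∃ (E : C) (u : X ⟶ E) (v : Y ⟶ E), e ≫ f ≫ u = e ≫ g ≫ v

/-- The weak amalgamation property. -/
def WeakAP (C : Type u) [Category.{v} C] : Prop :=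
  ∀ A : C, ∃ (B : C) (e : A ⟶ B), Amalgamable e

/-- The amalgamation property. -/
def AP (C : Type u) [Category.{v} C] : Prop :=
  ∀ {A X Y : C} (f : A ⟶ X) (g : A ⟶ Y),
    ∃ (E : C) (u : X ⟶ E) (v : Y ⟶ E), f ≫ u = g ≫ v

/-- The joint embedding property. -/
def JEP (C : Type u) [Category.{v} C] : Prop :=
  ∀ A B : C, ∃ (S : C), Nonempty (A ⟶ S) ∧ Nonempty (B ⟶ S)

/-- A preorder is `κ`-directed if every subset of cardinality `< κ` has an upper bound. -/
def IsCardinalDirected (J : Type v) [Preorder J] (κ : Cardinal.{v}) : Prop :=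
  ∀ S : Set J, Cardinal.mk S < κ → ∃ j : J, ∀ s ∈ S, s ≤ j

/-- `A` is `κ`-presentable if `Hom(A, −)` preserves colimits of `κ`-directed diagrams. -/
def Presentable (κ : Cardinal.{v}) (A : C) : Prop :=
  ∀ (J : Type v) (_ : Preorder J), IsCardinalDirected J κ →
    ∀ (F : J ⥤ C) (c : Cocone F), Nonempty (IsColimit c) →
      Nonempty (IsColimit ((coyoneda.obj (op A)).mapCocone c))

/-- `M` is weakly `κ`-saturated. -/
def WeaklySaturated (κ : Cardinal.{v}) (M : C) : Prop :=
  ∀ {A : C} (s : A ⟶ M), Presentable κ A →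
    ∃ (B : C) (e : A ⟶ B), Presentable κ B ∧
      ∀ {D : C} (g : B ⟶ D), Presentable κ D → ∃ h : D ⟶ M, e ≫ g ≫ h = s

/-- `C` is `κ`-accessible: every object is a colimit of a `κ`-directed diagram of
`κ`-presentable objects. -/
def IsAccessible (C : Type u) [Category.{v} C] (κ : Cardinal.{v}) : Prop :=
  ∀ X : C, ∃ (J : Type v) (_ : Preorder J), IsCardinalDirected J κ ∧
    ∃ (F : J ⥤ C) (c : Cocone F), Nonempty (IsColimit c) ∧ Nonempty (c.pt ≅ X) ∧
      ∀ j : J, Presentable κ (F.obj j)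

/-- `C` has directed colimits. -/
def HasDirectedColimits (C : Type u) [Category.{v} C] : Prop :=
  ∀ (J : Type v) (_ : Preorder J), IsDirected J (· ≤ ·) → Nonempty J →
    HasColimitsOfShape J C

/-- A morphism `p : K ⟶ M` is `κ`-pure. -/
def IsPure (κ : Cardinal.{v}) {K M : C} (p : K ⟶ M) : Prop :=
  ∀ {A B : C} (f : A ⟶ B) (v : A ⟶ K) (u : B ⟶ M),
    Presentable κ A → Presentable κ B → f ≫ u = v ≫ p → ∃ t : B ⟶ K, f ≫ t = v

/-- The smallness condition (SC). -/
def SmallnessCondition (C : Type u) [Category.{v} C] (κ : Cardinal.{v}) : Prop :=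
  ∀ {A N : C} (f : A ⟶ N), Presentable κ A → Amalgamable f →
    ∃ (B : C) (e : A ⟶ B) (g : B ⟶ N), Presentable κ B ∧ Amalgamable e ∧ e ≫ g = f

theorem stmt5 (κ : Cardinal.{v}) (hreg : κ.IsRegular)
    {K M : C} (p : K ⟶ M) (hp : IsPure κ p)
    (hM : WeaklySaturated κ M) : WeaklySaturated κ K := by
  intro A s hA
  obtain ⟨B, e, hB, hprop⟩ := hM (s ≫ p) hA
  refine ⟨B, e, hB, ?_⟩
  intro D g hD
  obtain ⟨h, hh⟩ := hprop g hD
  obtain ⟨t, ht⟩ := hp (e ≫ g) s h hA hD (by simpa [Category.assoc] using hh)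
  exact ⟨t, by simpa [Category.assoc] using ht⟩
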